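/- (Marsden identity in recursion-matrix form, quadratic case.) For all x, y ∈ ℝ², R1(β(x))·R2(β(x))·ψ2(y) = (1 − x·y)²·𝟙, where 𝟙 ∈ ℝ^{12} is the all-ones vector and x·y is the Euclidean inner product. -/

import Mathlib

/-- Euclidean inner product on `ℝ²`. -/
def dotR2 (x y : ℝ × ℝ) : ℝ := x.1 * y.1 + x.2 * y.2

/-- The linear polynomial `c_p(y) = 1 − p·y` attached to a point `p`. -/
noncomputable def cpl (p y : ℝ × ℝ) : ℝ := 1 - dotR2 p y

/-- The 12×10 recursion matrix `R1` (with `γj = 2 βj − c`; the paper's `R1` is `c = 1`,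
the derivative matrix `U1` is `c = 0`). -/
noncomputable def R1g (b1 b2 b3 c : ℝ) : Matrix (Fin 12) (Fin 10) ℝ :=
  !![2*b1 - c, 0, 0, 0, 0, 2*(b3 - b2), 4*b2, 0, 0, 0;
     2*b1 - c, 0, 0, 2*(b2 - b3), 0, 0, 4*b3, 0, 0, 0;
     0, 2*b2 - c, 0, 2*(b1 - b3), 0, 0, 0, 4*b3, 0, 0;
     0, 2*b2 - c, 0, 0, 2*(b3 - b1), 0, 0, 4*b1, 0, 0;
     0, 0, 2*b3 - c, 0, 2*(b2 - b1), 0, 0, 0, 4*b1, 0;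
     0, 0, 2*b3 - c, 0, 0, 2*(b1 - b2), 0, 0, 4*b2, 0;
     0, 0, 0, 0, 0, 2*(b3 - b2), 4*(b1 - b3), 0, 0, -3*(2*b1 - c);
     0, 0, 0, 2*(b2 - b3), 0, 0, 4*(b1 - b2), 0, 0, -3*(2*b1 - c);
     0, 0, 0, 2*(b1 - b3), 0, 0, 0, 4*(b2 - b1), 0, -3*(2*b2 - c);
     0, 0, 0, 0, 2*(b3 - b1), 0, 0, 4*(b2 - b3), 0, -3*(2*b2 - c);
     0, 0, 0, 0, 2*(b2 - b1), 0, 0, 0, 4*(b3 - b2), -3*(2*b3 - c);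
     0, 0, 0, 0, 0, 2*(b1 - b2), 0, 0, 4*(b3 - b1), -3*(2*b3 - c)]

/-- The 10×12 recursion matrix `R2` (with `γj = 2 βj − c`). -/
noncomputable def R2g (b1 b2 b3 c : ℝ) : Matrix (Fin 10) (Fin 12) ℝ :=
  !![2*b1 - c, 2*b2, 0, 0, 0, 0, 0, 0, 0, 0, 0, 2*b3;
     0, 0, 0, 2*b1, 2*b2 - c, 2*b3, 0, 0, 0, 0, 0, 0;
     0, 0, 0, 0, 0, 0, 0, 2*b2, 2*b3 - c, 2*b1, 0, 0;
     0, b1 - b3, 3*b3, b2 - b3, 0, 0, 0, 0, 0, 0, 0, 0;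
     0, 0, 0, 0, 0, b2 - b1, 3*b1, b3 - b1, 0, 0, 0, 0;
     0, 0, 0, 0, 0, 0, 0, 0, 0, b3 - b2, 3*b2, b1 - b2;
     0, (b1 - b3)/2, 3*b2/2, 0, 0, 0, 0, 0, 0, 0, 3*b3/2, (b1 - b2)/2;
     0, 0, 3*b1/2, (b2 - b3)/2, 0, (b2 - b1)/2, 3*b3/2, 0, 0, 0, 0, 0;
     0, 0, 0, 0, 0, 0, 3*b2/2, (b3 - b1)/2, 0, (b3 - b2)/2, 3*b1/2, 0;
     0, 0, -(2*b3 - c), 0, 0, 0, -(2*b1 - c), 0, 0, 0, -(2*b2 - c), 0]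

/-- The 12×16 recursion matrix `R3` (with `γj = 2 βj − c`). -/
noncomputable def R3g (b1 b2 b3 c : ℝ) : Matrix (Fin 12) (Fin 16) ℝ :=
  !![2*b1 - c, 2*b2, 0, 0, 0, 0, 0, 0, 0, 0, 0, 2*b3, 0, 0, 0, 0;
     0, b1 - b3, b2, 0, 0, 0, 0, 0, 0, 0, 0, 0, 2*b3, 0, 0, 0;
     0, 0, (b1 + b2)/3, 0, 0, 0, b3/3, 0, 0, 0, b3/3, 0, 2*b1/3, 2*b2/3, 0, b3/3;
     0, 0, b1, b2 - b3, 0, 0, 0, 0, 0, 0, 0, 0, 0, 2*b3, 0, 0;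
     0, 0, 0, 2*b1, 2*b2 - c, 2*b3, 0, 0, 0, 0, 0, 0, 0, 0, 0, 0;
     0, 0, 0, 0, 0, b2 - b1, b3, 0, 0, 0, 0, 0, 0, 2*b1, 0, 0;
     0, 0, b1/3, 0, 0, 0, (b2 + b3)/3, 0, 0, 0, b1/3, 0, 0, 2*b2/3, 2*b3/3, b1/3;
     0, 0, 0, 0, 0, 0, b2, b3 - b1, 0, 0, 0, 0, 0, 0, 2*b1, 0;
     0, 0, 0, 0, 0, 0, 0, 2*b2, 2*b3 - c, 2*b1, 0, 0, 0, 0, 0, 0;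
     0, 0, 0, 0, 0, 0, 0, 0, 0, b3 - b2, b1, 0, 0, 0, 2*b2, 0;
     0, 0, b2/3, 0, 0, 0, b2/3, 0, 0, 0, (b1 + b3)/3, 0, 2*b1/3, 0, 2*b3/3, b2/3;
     0, 0, 0, 0, 0, 0, 0, 0, 0, 0, b3, b1 - b2, 2*b2, 0, 0, 0]

/-- The recursion matrix `R1(β)`. -/
noncomputable def R1 (b1 b2 b3 : ℝ) : Matrix (Fin 12) (Fin 10) ℝ := R1g b1 b2 b3 1
/-- The recursion matrix `R2(β)`. -/
noncomputable def R2 (b1 b2 b3 : ℝ) : Matrix (Fin 10) (Fin 12) ℝ := R2g b1 b2 b3 1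
/-- The recursion matrix `R3(β)`. -/
noncomputable def R3 (b1 b2 b3 : ℝ) : Matrix (Fin 12) (Fin 16) ℝ := R3g b1 b2 b3 1

/-!
Both sides are polynomial in the barycentric coordinates `βj` and in the vertex values
`cj = 1 − pj·y`: since `p ↦ 1 − p·y` is affine, every `c_p` at a node is the corresponding
average of `c1, c2, c3`, and `1 − x·y = β1 c1 + β2 c2 + β3 c3 =: L`. The quadratic identity then
factors through the linear one: `R2(β) ψ2(y) = L ψ1(y)` and `R1(β) ψ1(y) = L 𝟙`, where
`ψ1(y) = (c1, …, c10)` lists the values at the ten nodes. Both are homogeneous identities once the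
constant `1` in `γj = 2βj − 1` is read as `β1 + β2 + β3`.
-/

open Matrix

lemma cpl_smul_add_smul_add_smul {b1 b2 b3 : ℝ} (hb : b1 + b2 + b3 = 1) (p1 p2 p3 y : ℝ × ℝ) :
    cpl (b1 • p1 + b2 • p2 + b3 • p3) y = b1 * cpl p1 y + b2 * cpl p2 y + b3 * cpl p3 y := by
  simp only [cpl, dotR2, Prod.fst_add, Prod.snd_add, Prod.smul_fst, Prod.smul_snd, smul_eq_mul]
  linear_combination -hb

lemma cpl_midpoint (p q y : ℝ × ℝ) :
    cpl ((2⁻¹ : ℝ) • (p + q)) y = (cpl p y + cpl q y) / 2 := by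
  simp only [cpl, dotR2, Prod.fst_add, Prod.snd_add, Prod.smul_fst, Prod.smul_snd, smul_eq_mul]
  ring

lemma cpl_centroid (p q r y : ℝ × ℝ) :
    cpl ((3⁻¹ : ℝ) • (p + q + r)) y = (cpl p y + cpl q y + cpl r y) / 3 := by
  rw [smul_add, smul_add, cpl_smul_add_smul_add_smul (by norm_num)]
  ring

/-- The values `c1, …, c10` of an affine function at the nodes `p1, …, p10` in terms of its
vertex values; the nodes `p7, p8, p9` are the midpoints of `p4p6`, `p4p5`, `p5p6`. -/
noncomputable def nodeValues (c1 c2 c3 : ℝ) : Fin 10 → ℝ :=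
  ![c1, c2, c3, (c1 + c2) / 2, (c2 + c3) / 2, (c3 + c1) / 2,
    (2 * c1 + c2 + c3) / 4, (c1 + 2 * c2 + c3) / 4, (c1 + c2 + 2 * c3) / 4, (c1 + c2 + c3) / 3]

/-- `ψ2` as a function of the node values `c = (c1, …, c10)` (indexed from `0`). -/
def quadraticProducts (c : Fin 10 → ℝ) : Fin 12 → ℝ :=
  ![c 0 ^ 2, c 0 * c 3, c 3 * c 9, c 1 * c 3, c 1 ^ 2, c 1 * c 4,
    c 4 * c 9, c 2 * c 4, c 2 ^ 2, c 2 * c 5, c 5 * c 9, c 0 * c 5]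

section Homogeneous

variable (b1 b2 b3 c1 c2 c3 : ℝ)

lemma R1g_mulVec_nodeValues :
    R1g b1 b2 b3 (b1 + b2 + b3) *ᵥ nodeValues c1 c2 c3
      = fun _ => b1 * c1 + b2 * c2 + b3 * c3 := by
  ext i
  fin_cases i <;>
  · simp only [R1g, nodeValues, mulVec, dotProduct, Fin.sum_univ_succ, Fin.sum_univ_zero, of_apply,
      cons_val', cons_val, cons_val_zero, cons_val_succ, cons_val_one, cons_val_fin_one, Fin.isValue,
      Fin.reduceFinMk, Fin.zero_eta, Fin.mk_one]
    ring

lemma R2g_mulVec_quadraticProducts :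
    R2g b1 b2 b3 (b1 + b2 + b3) *ᵥ quadraticProducts (nodeValues c1 c2 c3)
      = (b1 * c1 + b2 * c2 + b3 * c3) • nodeValues c1 c2 c3 := by
  ext i
  fin_cases i <;>
  · simp only [R2g, quadraticProducts, nodeValues, Pi.smul_apply, smul_eq_mul, mulVec, dotProduct,
      Fin.sum_univ_succ, Fin.sum_univ_zero, of_apply, cons_val', cons_val, cons_val_zero, cons_val_succ,
      cons_val_one, cons_val_fin_one, Fin.isValue, Fin.reduceFinMk, Fin.zero_eta, Fin.mk_one]
    ring

lemma R1g_mul_R2g_mulVec_quadraticProducts :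
    (R1g b1 b2 b3 (b1 + b2 + b3) * R2g b1 b2 b3 (b1 + b2 + b3)) *ᵥ
        quadraticProducts (nodeValues c1 c2 c3)
      = fun _ => (b1 * c1 + b2 * c2 + b3 * c3) ^ 2 := by
  rw [← mulVec_mulVec, R2g_mulVec_quadraticProducts, mulVec_smul,
    R1g_mulVec_nodeValues]
  ext
  simp only [Pi.smul_apply, smul_eq_mul]
  ring

end Homogeneous

theorem marsden_quadratic_general
    (p1 p2 p3 : ℝ × ℝ)
    (p4 p5 p6 p10 : ℝ × ℝ)
    (h4 : p4 = (2⁻¹ : ℝ) • (p1 + p2))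
    (h5 : p5 = (2⁻¹ : ℝ) • (p2 + p3))
    (h6 : p6 = (2⁻¹ : ℝ) • (p3 + p1))
    (h10 : p10 = (3⁻¹ : ℝ) • (p1 + p2 + p3))
    (x y : ℝ × ℝ) (b1 b2 b3 : ℝ)
    (hx : x = b1 • p1 + b2 • p2 + b3 • p3)
    (hb : b1 + b2 + b3 = 1) :
    (R1 b1 b2 b3 * R2 b1 b2 b3).mulVec
      ![cpl p1 y ^ 2, cpl p1 y * cpl p4 y, cpl p4 y * cpl p10 y, cpl p2 y * cpl p4 y,
        cpl p2 y ^ 2, cpl p2 y * cpl p5 y, cpl p5 y * cpl p10 y, cpl p3 y * cpl p5 y,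
        cpl p3 y ^ 2, cpl p3 y * cpl p6 y, cpl p6 y * cpl p10 y, cpl p1 y * cpl p6 y]
      = fun _ : Fin 12 => (1 - dotR2 x y) ^ 2 := by
  have hR1 : R1 b1 b2 b3 = R1g b1 b2 b3 (b1 + b2 + b3) := by rw [hb, R1]
  have hR2 : R2 b1 b2 b3 = R2g b1 b2 b3 (b1 + b2 + b3) := by rw [hb, R2]
  have hL : 1 - dotR2 x y = b1 * cpl p1 y + b2 * cpl p2 y + b3 * cpl p3 y := by
    rw [← cpl, hx, cpl_smul_add_smul_add_smul hb]
  subst h4 h5 h6 h10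
  rw [hR1, hR2, hL, cpl_midpoint, cpl_midpoint, cpl_midpoint, cpl_centroid]
  exact R1g_mul_R2g_mulVec_quadraticProducts b1 b2 b3 (cpl p1 y) (cpl p2 y) (cpl p3 y)

/-- Marsden identity, quadratic:
`R1(β(x)) R2(β(x)) ψ2(y) = (1 − x·y)² 𝟙`. -/
theorem marsden_quadratic
    (p1 p2 p3 : ℝ × ℝ)
    (hind : AffineIndependent ℝ ![p1, p2, p3])
    (p4 p5 p6 p7 p8 p9 p10 : ℝ × ℝ)
    (h4 : p4 = (2⁻¹ : ℝ) • (p1 + p2))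
    (h5 : p5 = (2⁻¹ : ℝ) • (p2 + p3))
    (h6 : p6 = (2⁻¹ : ℝ) • (p3 + p1))
    (h7 : p7 = (2⁻¹ : ℝ) • (p4 + p6))
    (h8 : p8 = (2⁻¹ : ℝ) • (p4 + p5))
    (h9 : p9 = (2⁻¹ : ℝ) • (p5 + p6))
    (h10 : p10 = (3⁻¹ : ℝ) • (p1 + p2 + p3))
    (x y : ℝ × ℝ) (b1 b2 b3 : ℝ)
    (hx : x = b1 • p1 + b2 • p2 + b3 • p3)
    (hb : b1 + b2 + b3 = 1) :
    (R1 b1 b2 b3 * R2 b1 b2 b3).mulVec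
      ![cpl p1 y ^ 2, cpl p1 y * cpl p4 y, cpl p4 y * cpl p10 y, cpl p2 y * cpl p4 y,
        cpl p2 y ^ 2, cpl p2 y * cpl p5 y, cpl p5 y * cpl p10 y, cpl p3 y * cpl p5 y,
        cpl p3 y ^ 2, cpl p3 y * cpl p6 y, cpl p6 y * cpl p10 y, cpl p1 y * cpl p6 y]
      = fun _ : Fin 12 => (1 - dotR2 x y) ^ 2 :=
  marsden_quadratic_general p1 p2 p3 p4 p5 p6 p10 h4 h5 h6 h10 x y b1 b2 b3 hx hb
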